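/- Let n, m be coprime integers with 1 < n < m, let r ≥ 1, and let Γ ⊆ (ℕ ∪ {∞})^r be the tropical semiring generated by v_1 = (n,…,n), v_2 = (m,…,m), and w_1, …, w_r where (w_i)_i = ∞ and (w_i)_j = nm for j ≠ i. Let S = ⟨n,m⟩ = { an + bm : a,b ∈ ℕ } be the numerical semigroup generated by n and m. Then for any k ∈ S with cnm ≤ k < (c+1)nm for some 0 ≤ c ≤ r−1, and any nonempty J ⊆ {1,…,r}, the J-fiber F_J(k̄) of k̄ = (k,…,k) with respect to Γ is nonempty if and only if: #J ≥ r − c when k − cnm ∈ S, and #J ≥ r − (c−1) when k − cnm ∉ S. -/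

import Mathlib

/-! Every element of `Γ` is, at each coordinate `j`, attained by a sum of generators
`a v₁ + b v₂ + ∑ eᵢ wᵢ` lying above it everywhere: this property survives sums, and a minimum
is attained at `j` by whichever argument is smaller there. Such a sum is `∞` on the support
of `e` and `an + bm + (∑ e) nm` off it. Hence the `J`-fiber of `k̄` is nonempty iff
`k = an + bm + t nm` with `t ≥ r - #J` (for the converse take `e` the indicator of the
complement of `J`). Now `k < (c+1) nm` forces `t ≤ c`, and if `k ≥ c nm` then
`k - (c-1) nm ∈ ⟨n,m⟩` (reduce `a` modulo `m`), so the largest admissible `t` is `c` or `c - 1`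
according as `k - c nm` lies in `⟨n,m⟩` or not. -/

/-- The tropical sub-semiring of `(ℕ∪{∞})^r` generated by a set `G`:
the smallest subset containing `0` and `G`, closed under componentwise
addition and componentwise minimum. -/
def tropGen {r : ℕ} (G : Set (Fin r → ℕ∞)) : Set (Fin r → ℕ∞) :=
  ⋂₀ {S : Set (Fin r → ℕ∞) | 0 ∈ S ∧ G ⊆ S ∧
      (∀ a ∈ S, ∀ b ∈ S, a + b ∈ S) ∧
      (∀ a ∈ S, ∀ b ∈ S, (fun i => min (a i) (b i)) ∈ S)}

/-- Generators of the value semiring of a plane curve with `r` branches,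
each with semigroup `⟨n,m⟩` and pairwise intersection multiplicities `nm`:
`v₁ = (n,…,n)`, `v₂ = (m,…,m)`, and `w_i` with `(w_i)_i = ∞`, `(w_i)_j = nm`. -/
def genNM (n m r : ℕ) : Set (Fin r → ℕ∞) :=
  {fun _ => (n : ℕ∞)} ∪ {fun _ => (m : ℕ∞)} ∪
    Set.range (fun i : Fin r => fun j : Fin r =>
      if j = i then (⊤ : ℕ∞) else ((n * m : ℕ) : ℕ∞))

section TropGen

variable {r : ℕ} {G : Set (Fin r → ℕ∞)}

theorem zero_mem_tropGen : (0 : Fin r → ℕ∞) ∈ tropGen G :=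
  Set.mem_sInter.mpr fun _ hS => hS.1

theorem subset_tropGen : G ⊆ tropGen G :=
  fun _ hx => Set.mem_sInter.mpr fun _ hS => hS.2.1 hx

theorem add_mem_tropGen {x y : Fin r → ℕ∞} (hx : x ∈ tropGen G) (hy : y ∈ tropGen G) :
    x + y ∈ tropGen G :=
  Set.mem_sInter.mpr fun S hS => hS.2.2.1 x (hx S hS) y (hy S hS)

theorem tropGen_subset_of {Q : Set (Fin r → ℕ∞)} (h0 : 0 ∈ Q) (hG : G ⊆ Q)
    (hadd : ∀ a ∈ Q, ∀ b ∈ Q, a + b ∈ Q)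
    (hmin : ∀ a ∈ Q, ∀ b ∈ Q, (fun i => min (a i) (b i)) ∈ Q) :
    tropGen G ⊆ Q :=
  Set.sInter_subset_of_mem ⟨h0, hG, hadd, hmin⟩

theorem closure_subset_tropGen : (AddSubmonoid.closure G : Set (Fin r → ℕ∞)) ⊆ tropGen G :=
  fun _ hx => AddSubmonoid.closure_induction (fun _ hg => subset_tropGen hg) zero_mem_tropGen
    (fun _ _ _ _ => add_mem_tropGen) hx

theorem exists_mem_closure_ge_apply_eq {δ : Fin r → ℕ∞} (hδ : δ ∈ tropGen G) (j : Fin r) :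
    ∃ σ ∈ AddSubmonoid.closure G, σ j = δ j ∧ δ ≤ σ := by
  refine tropGen_subset_of (Q := {δ | ∀ j, ∃ σ ∈ AddSubmonoid.closure G, σ j = δ j ∧ δ ≤ σ})
    ?_ ?_ ?_ ?_ hδ j
  · exact fun j => ⟨0, zero_mem _, rfl, le_rfl⟩
  · exact fun g hg j => ⟨g, AddSubmonoid.subset_closure hg, rfl, le_rfl⟩
  · intro δ₁ h₁ δ₂ h₂ j
    obtain ⟨σ₁, hσ₁, he₁, hle₁⟩ := h₁ j
    obtain ⟨σ₂, hσ₂, he₂, hle₂⟩ := h₂ j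
    exact ⟨σ₁ + σ₂, AddSubmonoid.add_mem _ hσ₁ hσ₂, by simp [he₁, he₂], add_le_add hle₁ hle₂⟩
  · intro δ₁ h₁ δ₂ h₂ j
    rcases le_total (δ₁ j) (δ₂ j) with hle | hle
    · obtain ⟨σ, hσ, he, hδσ⟩ := h₁ j
      exact ⟨σ, hσ, by simp [he, hle], fun i => (min_le_left _ _).trans (hδσ i)⟩
    · obtain ⟨σ, hσ, he, hδσ⟩ := h₂ j
      exact ⟨σ, hσ, by simp [he, hle], fun i => (min_le_right _ _).trans (hδσ i)⟩

end TropGen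

section GenNM

variable {n m r : ℕ}

/-- `(a, b, e) ↦ a v₁ + b v₂ + ∑ eᵢ wᵢ`, written coordinatewise: coordinate `i` is `⊤`
exactly when `eᵢ ≠ 0`. -/
def genNMSum (n m r : ℕ) : ℕ × ℕ × (Fin r → ℕ) →+ (Fin r → ℕ∞) where
  toFun x i := ((x.1 * n + x.2.1 * m + (∑ j, x.2.2 j) * (n * m) : ℕ) : ℕ∞) + x.2.2 i * ⊤
  map_zero' := by ext; simp
  map_add' x y := by
    ext i
    simp only [Prod.fst_add, Prod.snd_add, Pi.add_apply, Finset.sum_add_distrib]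
    push_cast
    ring

theorem genNMSum_apply_of_eq_zero {a b : ℕ} {e : Fin r → ℕ} {i : Fin r} (hi : e i = 0) :
    genNMSum n m r (a, b, e) i = ((a * n + b * m + (∑ j, e j) * (n * m) : ℕ) : ℕ∞) := by
  simp [genNMSum, hi]

theorem genNMSum_apply_of_ne_zero {a b : ℕ} {e : Fin r → ℕ} {i : Fin r} (hi : e i ≠ 0) :
    genNMSum n m r (a, b, e) i = ⊤ := by
  simp [genNMSum, hi]

theorem genNMSum_fst : genNMSum n m r (1, 0, 0) = fun _ => (n : ℕ∞) := by
  ext; simp [genNMSum]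

theorem genNMSum_snd : genNMSum n m r (0, 1, 0) = fun _ => (m : ℕ∞) := by
  ext; simp [genNMSum]

theorem genNMSum_single (i : Fin r) :
    genNMSum n m r (0, 0, Pi.single i 1) =
      fun j => if j = i then (⊤ : ℕ∞) else ((n * m : ℕ) : ℕ∞) := by
  ext j
  rcases eq_or_ne j i with rfl | hji
  · simp [genNMSum]
  · simp [genNMSum, hji, Pi.single_apply]

theorem mrange_genNMSum :
    AddMonoidHom.mrange (genNMSum n m r) = AddSubmonoid.closure (genNM n m r) := by
  refine le_antisymm ?_ (AddSubmonoid.closure_le.mpr ?_)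
  · rintro _ ⟨⟨a, b, e⟩, rfl⟩
    have hdecomp : ((a, b, e) : ℕ × ℕ × (Fin r → ℕ)) =
        a • (1, 0, 0) + b • (0, 1, 0) + ∑ i, e i • (0, 0, Pi.single i 1) := by
      ext <;> simp [Prod.fst_sum, Prod.snd_sum, Finset.sum_apply, Pi.single_apply]
    simp only [hdecomp, map_add, map_nsmul, map_sum, genNMSum_fst, genNMSum_snd, genNMSum_single]
    refine add_mem (add_mem (nsmul_mem ?_ a) (nsmul_mem ?_ b)) (sum_mem fun i _ => nsmul_mem ?_ _)
    all_goals exact AddSubmonoid.subset_closure (by simp [genNM])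
  · rintro _ ((rfl | rfl) | ⟨i, rfl⟩)
    exacts [⟨_, genNMSum_fst⟩, ⟨_, genNMSum_snd⟩, ⟨_, genNMSum_single i⟩]

end GenNM

theorem fiber_nonempty_iff_exists_repr {n m r k : ℕ} {J : Finset (Fin r)} (hJ : J.Nonempty) :
    (∃ δ ∈ tropGen (genNM n m r), (∀ j ∈ J, δ j = (k : ℕ∞)) ∧ (∀ i ∉ J, (k : ℕ∞) < δ i)) ↔
      ∃ a b t : ℕ, r - J.card ≤ t ∧ k = a * n + b * m + t * (n * m) := by
  constructor
  · rintro ⟨δ, hδ, hδJ, hδJc⟩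
    obtain ⟨j₀, hj₀⟩ := hJ
    obtain ⟨σ, hσ, hσj₀, hδσ⟩ := exists_mem_closure_ge_apply_eq hδ j₀
    obtain ⟨⟨a, b, e⟩, rfl⟩ := mrange_genNMSum.ge hσ
    rw [hδJ j₀ hj₀] at hσj₀
    have hej₀ : e j₀ = 0 := by
      by_contra h
      rw [genNMSum_apply_of_ne_zero h] at hσj₀
      exact ENat.top_ne_natCast _ hσj₀
    have hk : k = a * n + b * m + (∑ j, e j) * (n * m) := by
      rw [genNMSum_apply_of_eq_zero hej₀] at hσj₀
      exact_mod_cast hσj₀.symm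
    have heJc : ∀ i ∈ Jᶜ, 1 ≤ e i := by
      intro i hi
      rw [Nat.one_le_iff_ne_zero]
      intro h0
      have := (hδJc i (Finset.mem_compl.mp hi)).trans_le (hδσ i)
      rw [genNMSum_apply_of_eq_zero h0, ← hk] at this
      exact lt_irrefl _ this
    refine ⟨a, b, ∑ j, e j, ?_, hk⟩
    calc r - J.card = Jᶜ.card := by simp [Finset.card_compl]
      _ ≤ ∑ i ∈ Jᶜ, e i := by simpa using Finset.card_nsmul_le_sum _ _ _ heJc
      _ ≤ ∑ i, e i := Finset.sum_le_sum_of_subset (Finset.subset_univ _)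
  · rintro ⟨a, b, t, ht, rfl⟩
    obtain ⟨d, rfl⟩ := Nat.exists_eq_add_of_le ht
    let e : Fin r → ℕ := fun i => if i ∈ J then 0 else 1
    have he : ∑ i, e i = r - J.card := by
      simp [e, Finset.sum_ite, Finset.filter_notMem_eq_sdiff, Finset.card_univ_sdiff]
    refine ⟨genNMSum n m r (a + d * m, b, e),
      closure_subset_tropGen (mrange_genNMSum.le ⟨_, rfl⟩), fun j hj => ?_, fun i hi => ?_⟩
    · rw [genNMSum_apply_of_eq_zero (by simp [e, hj]), he]
      push_cast
      ring
    · rw [genNMSum_apply_of_ne_zero (by simp [e, hi])]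
      exact ENat.natCast_lt_top _

theorem exists_add_mul_eq_of_succ_mul_le {n m a b t : ℕ} (hn : 0 < n) (hm : 0 < m)
    (h : (t + 1) * (n * m) ≤ a * n + b * m) :
    ∃ a₀ b₀ : ℕ, a * n + b * m = a₀ * n + b₀ * m + t * (n * m) := by
  have hrep : a * n + b * m = a % m * n + (b + a / m * n) * m := by
    conv_lhs => rw [← Nat.mod_add_div a m]
    ring
  have hB : t * n ≤ b + a / m * n := by
    by_contra! hlt
    have h₁ : a % m * n < m * n := Nat.mul_lt_mul_of_pos_right (Nat.mod_lt a hm) hn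
    have h₂ : (b + a / m * n + 1) * m ≤ t * n * m := Nat.mul_le_mul_right m hlt
    nlinarith
  obtain ⟨b₀, hb₀⟩ := Nat.exists_eq_add_of_le hB
  exact ⟨a % m, b₀, by rw [hrep, hb₀]; ring⟩

theorem fiber_nonempty_iff_nm_general (n m r : ℕ) (hn : 1 < n) (hnm : n < m)
    (k c : ℕ)
    (hk : ∃ a b : ℕ, k = a * n + b * m)
    (hlo : c * (n * m) ≤ k) (hhi : k < (c + 1) * (n * m))
    (J : Finset (Fin r)) (hJ : J.Nonempty) :
    ((∃ a b : ℕ, k - c * (n * m) = a * n + b * m) →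
      ((∃ δ ∈ tropGen (genNM n m r),
          (∀ j ∈ J, δ j = (k : ℕ∞)) ∧ (∀ i ∉ J, (k : ℕ∞) < δ i)) ↔
        r - c ≤ J.card)) ∧
    ((¬ ∃ a b : ℕ, k - c * (n * m) = a * n + b * m) →
      ((∃ δ ∈ tropGen (genNM n m r),
          (∀ j ∈ J, δ j = (k : ℕ∞)) ∧ (∀ i ∉ J, (k : ℕ∞) < δ i)) ↔
        r - (c - 1) ≤ J.card)) := by
  have ht_le : ∀ a b t : ℕ, k = a * n + b * m + t * (n * m) → t ≤ c := fun a b t h =>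
    Nat.lt_succ_iff.mp (Nat.lt_of_mul_lt_mul_right ((by omega : t * (n * m) ≤ k).trans_lt hhi))
  rw [fiber_nonempty_iff_exists_repr hJ]
  constructor
  · rintro ⟨a, b, hab⟩
    constructor
    · rintro ⟨a', b', t, hJt, hk'⟩
      have := ht_le _ _ _ hk'
      omega
    · exact fun hJc => ⟨a, b, c, by omega, by omega⟩
  · intro hnS
    obtain ⟨a, b, rfl⟩ := hk
    have hc : 1 ≤ c := by
      by_contra! hc
      exact hnS ⟨a, b, by simp [Nat.lt_one_iff.mp hc]⟩
    have hlo' : (c - 1 + 1) * (n * m) ≤ a * n + b * m := by rwa [Nat.sub_add_cancel hc]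
    obtain ⟨a₀, b₀, hrep⟩ := exists_add_mul_eq_of_succ_mul_le (by omega) (by omega) hlo'
    constructor
    · rintro ⟨a', b', t, hJt, hk'⟩
      have htc : t ≠ c := by
        rintro rfl
        exact hnS ⟨a', b', by omega⟩
      have := ht_le _ _ _ hk'
      omega
    · exact fun hJc => ⟨a₀, b₀, c - 1, by omega, hrep⟩

/-- The fiber criterion for the value semiring of `r` branches with semigroup
`⟨n,m⟩` and pairwise intersection multiplicity `nm`: for `k ∈ ⟨n,m⟩` with
`cnm ≤ k < (c+1)nm`, `0 ≤ c ≤ r−1`, the `J`-fiber of `k̄` is nonempty iff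
`#J ≥ r − c` when `k − cnm ∈ ⟨n,m⟩`, and `#J ≥ r − (c−1)` otherwise. -/
theorem fiber_nonempty_iff_nm (n m r : ℕ) (hn : 1 < n) (hnm : n < m)
    (hcop : Nat.Coprime n m) (hr : 1 ≤ r) (k c : ℕ)
    (hk : ∃ a b : ℕ, k = a * n + b * m) (hc : c ≤ r - 1)
    (hlo : c * (n * m) ≤ k) (hhi : k < (c + 1) * (n * m))
    (J : Finset (Fin r)) (hJ : J.Nonempty) :
    ((∃ a b : ℕ, k - c * (n * m) = a * n + b * m) →
      ((∃ δ ∈ tropGen (genNM n m r),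
          (∀ j ∈ J, δ j = (k : ℕ∞)) ∧ (∀ i ∉ J, (k : ℕ∞) < δ i)) ↔
        r - c ≤ J.card)) ∧
    ((¬ ∃ a b : ℕ, k - c * (n * m) = a * n + b * m) →
      ((∃ δ ∈ tropGen (genNM n m r),
          (∀ j ∈ J, δ j = (k : ℕ∞)) ∧ (∀ i ∉ J, (k : ℕ∞) < δ i)) ↔
        r - (c - 1) ≤ J.card)) :=
  fiber_nonempty_iff_nm_general n m r hn hnm k c hk hlo hhi J hJ
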